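/- Let X and Y be real Banach spaces, and let Λ : X → Y and A : Y → X be bounded linear operators such that A∘Λ = Id − K for some bounded linear operator K : X → X satisfying ‖K g‖ < ‖g‖ for every g ∈ X with g ≠ 0. Fix f ∈ X and suppose that the partial sums g_N = ∑_{m=0}^{N} K^m (A(Λ f)) converge to some g ∈ X as N → ∞. Then g = f; that is, whenever the Neumann series converges, it converges to the true source. -/
import Mathlib


/-- If `A ∘ Λ = Id - K` with `‖K g‖ < ‖g‖` for every `g ≠ 0`, and for a fixed
`f` the partial sums of the Neumann series `∑ K^m (A (Λ f))` converge to some `g`, then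
`g = f`. -/
theorem neumann_series_limit_is_source
    {X Y : Type*} [NormedAddCommGroup X] [NormedSpace ℝ X] [CompleteSpace X]
    [NormedAddCommGroup Y] [NormedSpace ℝ Y] [CompleteSpace Y]
    (Λ : X →L[ℝ] Y) (A : Y →L[ℝ] X) (K : X →L[ℝ] X)
    (hAΛ : A.comp Λ = ContinuousLinearMap.id ℝ X - K)
    (hK : ∀ g : X, g ≠ 0 → ‖K g‖ < ‖g‖)
    (f g : X)
    (hconv : Filter.Tendsto (fun N : ℕ => ∑ m ∈ Finset.range (N + 1), (K ^ m) (A (Λ f)))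
      Filter.atTop (nhds g)) :
    g = f := by
  set h : X := A (Λ f) with hh
  have hf : h = f - K f := by
    have := congrArg (fun T : X →L[ℝ] X => T f) hAΛ
    simpa using this
  -- K applied to partial sums
  have hKconv : Filter.Tendsto
      (fun N : ℕ => K (∑ m ∈ Finset.range (N + 1), (K ^ m) h))
      Filter.atTop (nhds (K g)) := (K.continuous.tendsto g).comp hconv
  have hshift : ∀ N : ℕ, K (∑ m ∈ Finset.range (N + 1), (K ^ m) h)
      = (∑ m ∈ Finset.range (N + 1 + 1), (K ^ m) h) - h := by
    intro N
    rw [map_sum]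
    rw [Finset.sum_range_succ' (fun m => (K ^ m) h) (N + 1)]
    simp only [pow_succ, pow_zero, ContinuousLinearMap.mul_apply, ContinuousLinearMap.one_apply]
    have : ∀ x ∈ Finset.range (N + 1), K ((K ^ x) h) = (K ^ x) (K h) := by
      intro x _
      rw [← ContinuousLinearMap.mul_apply, ← ContinuousLinearMap.mul_apply, ← pow_succ, ← pow_succ']
    rw [Finset.sum_congr rfl this]
    abel
  have hconv' : Filter.Tendsto
      (fun N : ℕ => (∑ m ∈ Finset.range (N + 1 + 1), (K ^ m) h) - h)
      Filter.atTop (nhds (g - h)) :=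
    (hconv.comp (Filter.tendsto_add_atTop_nat 1)).sub tendsto_const_nhds
  have hKg : K g = g - h := by
    have : Filter.Tendsto (fun N : ℕ => K (∑ m ∈ Finset.range (N + 1), (K ^ m) h))
        Filter.atTop (nhds (g - h)) := by
      simpa only [hshift] using hconv'
    exact tendsto_nhds_unique hKconv this
  have hfix : K (g - f) = g - f := by
    rw [map_sub, hKg, hf]; abel
  by_contra hne
  have hne' : g - f ≠ 0 := sub_ne_zero.mpr hne
  have := hK (g - f) hne'
  rw [hfix] at this
  exact lt_irrefl _ this
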